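/- Let n ≥ 5 be an integer. Then μ₂(𝔏(Q_n)) ≤ 4, where μ₂ denotes the second-smallest eigenvalue. -/

import Mathlib

open Matrix

/-- The ascending sorted list of eigenvalues (with multiplicity) of a real
symmetric (Hermitian) matrix; junk value `[]` otherwise. -/
noncomputable def eigsList {m : Type*} [Fintype m] [DecidableEq m]
    (M : Matrix m m ℝ) : List ℝ :=
  if h : M.IsHermitian then Multiset.sort (Finset.univ.val.map h.eigenvalues) (· ≤ ·)
  else []

/-- The `k`-th largest eigenvalue (1-indexed, counted with multiplicity). -/
noncomputable def kthLargest {m : Type*} [Fintype m] [DecidableEq m]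
    (M : Matrix m m ℝ) (k : ℕ) : ℝ :=
  (eigsList M).getD (Fintype.card m - k) 0

/-- The `k`-th smallest eigenvalue (1-indexed, counted with multiplicity). -/
noncomputable def kthSmallest {m : Type*} [Fintype m] [DecidableEq m]
    (M : Matrix m m ℝ) (k : ℕ) : ℝ :=
  (eigsList M).getD (k - 1) 0

/-- The Laplacian `𝔏(M) = diag(M·1) − M`. -/
noncomputable def Lap {n : ℕ} (M : Matrix (Fin n) (Fin n) ℝ) : Matrix (Fin n) (Fin n) ℝ :=
  Matrix.diagonal (fun i => ∑ j, M i j) - M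

/-- The matrix `Q_n` (1-indexed description, realized on `Fin n`). -/
noncomputable def Qmat (n : ℕ) : Matrix (Fin n) (Fin n) ℝ := fun i j =>
  let d := ((i.val : ℤ) - (j.val : ℤ)).natAbs
  if d = 0 then
    (if i.val = 0 ∨ i.val = n - 1 then ((n : ℝ) ^ 2 - n - 6) / 2
     else if i.val = 1 ∨ i.val = n - 2 then ((n : ℝ) ^ 2 - 3 * n - 2) / 2
     else ((n : ℝ) ^ 2 - 3 * n - 6) / 2)
  else if d = 1 then (n : ℝ) - 2
  else if d = 2 then 2
  else 0

/-- The matrix `Q'_n` (1-indexed description, realized on `Fin n`). -/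
noncomputable def Qp (n : ℕ) : Matrix (Fin n) (Fin n) ℝ := fun i j =>
  let a := i.val + 1
  let b := j.val + 1
  if (a = 1 ∧ b = 2) ∨ (a = 2 ∧ b = 1) then (n : ℝ) - 2
  else if (a = 1 ∧ b = 3) ∨ (a = 3 ∧ b = 1) then 2
  else if a = 2 ∧ b = 2 then 1
  else if (a = 2 ∧ b = 3) ∨ (a = 3 ∧ b = 2) then 1
  else if a = 3 ∧ b = 3 then (n : ℝ) - 4
  else if (3 ≤ a ∧ a ≤ n - 1 ∧ b = a + 1) ∨ (3 ≤ b ∧ b ≤ n - 1 ∧ a = b + 1) then 1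
  else if a = b ∧ 4 ≤ a ∧ a ≤ n - 1 then (n : ℝ) - 2
  else if a = n ∧ b = n then (n : ℝ) - 1
  else 0

/-!
By the min-max principle, `μ₂(A)` is at most `c` as soon as the quadratic form of `A` is bounded
by `c‖x‖²` on a two-dimensional subspace: such a subspace contains a nonzero vector orthogonal to
the first eigenvector, and expanding in the eigenbasis shows that some eigenvalue other than the
first is `≤ c`. For `A = 𝔏(Q_n)` take the span of the constant vector, which `A` kills, and of the
ramp `vᵢ = 2i - (n - 1)`, orthogonal to it. As `Q_n` only couples indices at distance one (weight
`n - 2`) and two (weight `2`), `vᵀ A v = ½ ∑ᵢⱼ Qᵢⱼ (vᵢ - vⱼ)² = 4 (n - 2) (n + 7)`, while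
`‖v‖² = n (n² - 1) / 3`; and `4 (n - 2) (n + 7) ≤ 4 n (n² - 1) / 3` amounts to
`(n - 5) (n² + 2n - 6) + 12 ≥ 0`.
-/

open Finset

theorem Multiset.getD_sort_le_of_le_countP {α : Type*} [LinearOrder α] {s : Multiset α} {c : α}
    (d : α) {k : ℕ} (hk0 : 0 < k) (hk : k ≤ s.countP (· ≤ c)) :
    (s.sort (· ≤ ·)).getD (k - 1) d ≤ c := by
  set l := s.sort (· ≤ ·)
  have hcount : l.countP (· ≤ c) = s.countP (· ≤ c) := by
    conv_rhs => rw [← Multiset.sort_eq s (· ≤ ·)]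
    rw [Multiset.coe_countP]
  have hlen : k - 1 < l.length := by
    have := List.countP_le_length (p := (· ≤ c)) (l := l)
    omega
  rw [List.getD_eq_getElem _ _ hlen]
  by_contra! hc
  have hdrop : (l.drop (k - 1)).countP (· ≤ c) = 0 := by
    have hsorted := (Multiset.pairwise_sort s (· ≤ ·)).drop (i := k - 1)
    rw [List.drop_eq_getElem_cons hlen] at hsorted ⊢
    rw [List.countP_eq_zero]
    intro a ha
    simp only [decide_eq_true_eq, not_le]
    rcases List.mem_cons.mp ha with rfl | ha
    · exact hc
    · exact hc.trans_le (List.rel_of_pairwise_cons hsorted ha)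
  have htake : (l.take (k - 1)).countP (· ≤ c) ≤ k - 1 :=
    List.countP_le_length.trans (List.length_take_le _ _)
  have hsplit := List.countP_append (p := fun x => decide (x ≤ c)) (l₁ := l.take (k - 1))
    (l₂ := l.drop (k - 1))
  rw [List.take_append_drop] at hsplit
  omega

section MinMax

variable {ι : Type*} [Fintype ι] [DecidableEq ι] {A : Matrix ι ι ℝ}

namespace Matrix.IsHermitian

variable (hA : A.IsHermitian)

theorem sum_eigenvectorBasis_dotProduct_mul (x y : ι → ℝ) :
    ∑ i, (⇑(hA.eigenvectorBasis i) ⬝ᵥ x) * (⇑(hA.eigenvectorBasis i) ⬝ᵥ y)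
      = x ⬝ᵥ y := by
  have := hA.eigenvectorBasis.sum_inner_mul_inner (WithLp.toLp 2 x) (WithLp.toLp 2 y)
  simp only [EuclideanSpace.inner_eq_star_dotProduct, star_trivial] at this
  simpa [dotProduct_comm] using this

theorem eigenvectorBasis_dotProduct_mulVec (x : ι → ℝ) (i : ι) :
    ⇑(hA.eigenvectorBasis i) ⬝ᵥ (A *ᵥ x)
      = hA.eigenvalues i * (⇑(hA.eigenvectorBasis i) ⬝ᵥ x) := by
  rw [dotProduct_mulVec, ← mulVec_transpose, (isHermitian_iff_isSymm.mp hA).eq,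
    hA.mulVec_eigenvectorBasis, smul_dotProduct, smul_eq_mul]

theorem dotProduct_mulVec_eq_sum (x : ι → ℝ) :
    x ⬝ᵥ (A *ᵥ x) = ∑ i, hA.eigenvalues i * (⇑(hA.eigenvectorBasis i) ⬝ᵥ x) ^ 2 := by
  rw [← hA.sum_eigenvectorBasis_dotProduct_mul]
  simp only [eigenvectorBasis_dotProduct_mulVec]
  exact sum_congr rfl fun i _ => by ring

theorem finrank_le_card_eigenvalues_le (W : Submodule ℝ (ι → ℝ)) {c : ℝ}
    (hW : ∀ x ∈ W, x ⬝ᵥ (A *ᵥ x) ≤ c * (x ⬝ᵥ x)) :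
    Module.finrank ℝ W ≤ #{i | hA.eigenvalues i ≤ c} := by
  set S : Finset ι := {i | hA.eigenvalues i ≤ c}
  by_contra! hlt
  let coeffs : W →ₗ[ℝ] (S → ℝ) :=
    { toFun := fun x i => ⇑(hA.eigenvectorBasis i) ⬝ᵥ x
      map_add' := fun x y => by ext; simp [dotProduct_add]
      map_smul' := fun a x => by ext; simp [dotProduct_smul] }
  have hdim : Module.finrank ℝ (S → ℝ) < Module.finrank ℝ W := by simpa using hlt
  obtain ⟨⟨x, hxW⟩, hx, hx0⟩ :=
    (Submodule.ne_bot_iff _).mp (LinearMap.ker_ne_bot_of_finrank_lt (f := coeffs) hdim)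
  have hxS : ∀ i ∈ S, ⇑(hA.eigenvectorBasis i) ⬝ᵥ x = 0 :=
    fun i hi => congrFun hx ⟨i, hi⟩
  obtain ⟨j, hj⟩ : ∃ j, ⇑(hA.eigenvectorBasis j) ⬝ᵥ x ≠ 0 := by
    by_contra! h
    apply hx0
    rw [Submodule.mk_eq_zero, ← dotProduct_self_eq_zero,
      ← hA.sum_eigenvectorBasis_dotProduct_mul]
    simp [h]
  have hpos : 0 < ∑ i, (hA.eigenvalues i - c) * (⇑(hA.eigenvectorBasis i) ⬝ᵥ x) ^ 2 := by
    refine sum_pos' (fun i _ => ?_) ⟨j, mem_univ _, ?_⟩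
    · by_cases hi : i ∈ S
      · simp [hxS i hi]
      · exact mul_nonneg (by simp [S] at hi; linarith) (sq_nonneg _)
    · have hjS : j ∉ S := fun h => hj (hxS j h)
      exact mul_pos (by simpa [S] using hjS) (by positivity)
  have hsplit : ∑ i, (hA.eigenvalues i - c) * (⇑(hA.eigenvectorBasis i) ⬝ᵥ x) ^ 2
      = x ⬝ᵥ (A *ᵥ x) - c * (x ⬝ᵥ x) := by
    rw [hA.dotProduct_mulVec_eq_sum, ← hA.sum_eigenvectorBasis_dotProduct_mul, mul_sum,
      ← sum_sub_distrib]
    exact sum_congr rfl fun i _ => by ring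
  linarith [hW x hxW]

end Matrix.IsHermitian

theorem kthSmallest_le_of_le_finrank (hA : A.IsHermitian) (W : Submodule ℝ (ι → ℝ)) {c : ℝ}
    {k : ℕ} (hk0 : 0 < k) (hk : k ≤ Module.finrank ℝ W)
    (hW : ∀ x ∈ W, x ⬝ᵥ (A *ᵥ x) ≤ c * (x ⬝ᵥ x)) :
    kthSmallest A k ≤ c := by
  rw [kthSmallest, eigsList, dif_pos hA]
  refine Multiset.getD_sort_le_of_le_countP _ hk0 ?_
  rw [Multiset.countP_map]
  exact hk.trans (hA.finrank_le_card_eigenvalues_le W hW)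

theorem kthSmallest_two_le_of_mulVec_eq_zero (hA : A.IsHermitian) {u v : ι → ℝ}
    (huv : LinearIndependent ℝ ![u, v]) (hAu : A *ᵥ u = 0) (horth : u ⬝ᵥ v = 0) {c : ℝ}
    (hc : 0 ≤ c) (hv : v ⬝ᵥ (A *ᵥ v) ≤ c * (v ⬝ᵥ v)) :
    kthSmallest A 2 ≤ c := by
  refine kthSmallest_le_of_le_finrank hA (Submodule.span ℝ (Set.range ![u, v])) two_pos
    (by simp [finrank_span_eq_card huv]) fun x hx => ?_
  rw [Matrix.range_cons_cons_empty, Submodule.mem_span_pair] at hx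
  obtain ⟨a, b, rfl⟩ := hx
  have huAv : u ⬝ᵥ (A *ᵥ v) = 0 := by
    rw [dotProduct_mulVec, ← mulVec_transpose, (isHermitian_iff_isSymm.mp hA).eq, hAu,
      zero_dotProduct]
  have hform : (a • u + b • v) ⬝ᵥ (A *ᵥ (a • u + b • v))
      = b ^ 2 * (v ⬝ᵥ (A *ᵥ v)) := by
    simp only [mulVec_add, mulVec_smul, hAu, smul_zero, zero_add, add_dotProduct, smul_dotProduct,
      dotProduct_smul, huAv, smul_eq_mul]
    ring
  have hnorm : (a • u + b • v) ⬝ᵥ (a • u + b • v)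
      = a ^ 2 * (u ⬝ᵥ u) + b ^ 2 * (v ⬝ᵥ v) := by
    simp only [add_dotProduct, dotProduct_add, smul_dotProduct, dotProduct_smul, smul_eq_mul,
      horth, dotProduct_comm v u]
    ring
  rw [hform, hnorm]
  have huu : 0 ≤ u ⬝ᵥ u := sum_nonneg fun i _ => mul_self_nonneg (u i)
  nlinarith [mul_nonneg (mul_nonneg hc (sq_nonneg a)) huu,
    mul_le_mul_of_nonneg_left hv (sq_nonneg b)]

end MinMax

section Laplacian

variable {n : ℕ} {M : Matrix (Fin n) (Fin n) ℝ}

theorem lap_mulVec_one (M : Matrix (Fin n) (Fin n) ℝ) : Lap M *ᵥ 1 = 0 := by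
  ext i
  rw [Lap, sub_mulVec, Pi.sub_apply, mulVec_diagonal]
  simp [mulVec, dotProduct]

theorem lap_isHermitian (hM : M.IsSymm) : (Lap M).IsHermitian := by
  rw [isHermitian_iff_isSymm, Lap, IsSymm, transpose_sub, diagonal_transpose, hM.eq]

theorem dotProduct_lap_mulVec (x : Fin n → ℝ) :
    x ⬝ᵥ (Lap M *ᵥ x) = ∑ i, ∑ j, M i j * (x i ^ 2 - x i * x j) := by
  rw [Lap, sub_mulVec, dotProduct_sub]
  simp only [dotProduct, mulVec_diagonal]
  simp only [mulVec, dotProduct, mul_sum, sum_mul, ← sum_sub_distrib]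
  exact sum_congr rfl fun i _ => sum_congr rfl fun j _ => by ring

theorem two_mul_dotProduct_lap_mulVec (hM : M.IsSymm) (x : Fin n → ℝ) :
    2 * (x ⬝ᵥ (Lap M *ᵥ x)) = ∑ i, ∑ j, M i j * (x i - x j) ^ 2 := by
  have hswap : ∑ i, ∑ j, M i j * (x j ^ 2 - x i * x j)
      = ∑ i, ∑ j, M i j * (x i ^ 2 - x i * x j) := by
    rw [sum_comm]
    exact sum_congr rfl fun i _ => sum_congr rfl fun j _ => by rw [hM.apply i j]; ring
  rw [two_mul, dotProduct_lap_mulVec]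
  nth_rewrite 2 [← hswap]
  rw [← sum_add_distrib]
  exact sum_congr rfl fun i _ => by rw [← sum_add_distrib]; exact sum_congr rfl fun j _ => by ring

end Laplacian

theorem sum_sum_ite_natAbs_sub_eq (n : ℕ) {k : ℕ} (hk : 0 < k) :
    ∑ i : Fin n, ∑ j : Fin n, (if ((i : ℤ) - j).natAbs = k then (1 : ℝ) else 0)
      = 2 * (n - k : ℕ) := by
  have hsplit : ∀ i j : Fin n, (if ((i : ℤ) - j).natAbs = k then (1 : ℝ) else 0)
      = (if (j : ℕ) = i + k then 1 else 0) + (if (i : ℕ) = j + k then 1 else 0) := by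
    intro i j
    split_ifs <;> first | omega | norm_num
  have hrow : ∀ i : Fin n, ∑ j : Fin n, (if (j : ℕ) = i + k then (1 : ℝ) else 0)
      = if (i : ℕ) + k < n then 1 else 0 := by
    intro i
    rw [Fin.sum_univ_eq_sum_range (fun j => if j = (i : ℕ) + k then (1 : ℝ) else 0),
      sum_ite_eq']
    simp
  have hcount : ∑ i : Fin n, ∑ j : Fin n, (if (j : ℕ) = i + k then (1 : ℝ) else 0)
      = (n - k : ℕ) := by
    simp only [hrow]
    rw [Fin.sum_univ_eq_sum_range (fun i => if i + k < n then (1 : ℝ) else 0), sum_boole]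
    congr
    rw [← card_range (n - k)]
    congr 1
    ext i
    simp only [mem_filter, mem_range]
    omega
  simp only [hsplit, sum_add_distrib]
  rw [sum_comm (f := fun i j : Fin n => if (i : ℕ) = j + k then (1 : ℝ) else 0), hcount]
  ring

theorem qmat_isSymm (n : ℕ) : (Qmat n).IsSymm := by
  refine IsSymm.ext fun i j => ?_
  rcases eq_or_ne i j with rfl | hij
  · rfl
  · have hne : ((j : ℤ) - i).natAbs ≠ 0 := by omega
    have hd : ((i : ℤ) - j).natAbs = ((j : ℤ) - i).natAbs := by omega
    simp only [Qmat, hd, if_neg hne]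

theorem sum_range_natCast (n : ℕ) : ∑ i ∈ range n, (i : ℝ) = n * (n - 1) / 2 := by
  induction n with
  | zero => simp
  | succ m ih => rw [sum_range_succ, ih]; push_cast; ring

theorem sum_range_natCast_sq (n : ℕ) :
    ∑ i ∈ range n, (i : ℝ) ^ 2 = n * (n - 1) * (2 * n - 1) / 6 := by
  induction n with
  | zero => simp
  | succ m ih => rw [sum_range_succ, ih]; push_cast; ring

def ramp (n : ℕ) : Fin n → ℝ := fun i => 2 * i - (n - 1)

theorem one_dotProduct_ramp (n : ℕ) : 1 ⬝ᵥ ramp n = 0 := by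
  simp only [one_dotProduct, ramp]
  rw [Fin.sum_univ_eq_sum_range (fun i => 2 * (i : ℝ) - (n - 1)),
    sum_sub_distrib, ← mul_sum, sum_range_natCast, sum_const, card_range, nsmul_eq_mul]
  ring

theorem ramp_dotProduct_ramp (n : ℕ) : ramp n ⬝ᵥ ramp n = n * (n ^ 2 - 1) / 3 := by
  have hsq : ∀ i : ℕ, (2 * (i : ℝ) - (n - 1)) * (2 * i - (n - 1))
      = 4 * (i : ℝ) ^ 2 - 4 * (n - 1) * i + (n - 1) ^ 2 := fun i => by ring
  simp only [dotProduct, ramp]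
  rw [Fin.sum_univ_eq_sum_range (fun i => (2 * (i : ℝ) - (n - 1)) * (2 * i - (n - 1))),
    sum_congr rfl fun i _ => hsq i, sum_add_distrib, sum_sub_distrib, ← mul_sum, ← mul_sum,
    sum_range_natCast, sum_range_natCast_sq, sum_const, card_range, nsmul_eq_mul]
  ring

theorem qmat_mul_sq_sub_ramp {n : ℕ} (i j : Fin n) :
    Qmat n i j * (ramp n i - ramp n j) ^ 2
      = 4 * (n - 2) * (if ((i : ℤ) - j).natAbs = 1 then 1 else 0)
        + 32 * (if ((i : ℤ) - j).natAbs = 2 then 1 else 0) := by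
  have hsq : (ramp n i - ramp n j) ^ 2 = 4 * (((i : ℤ) - j).natAbs : ℝ) ^ 2 := by
    rw [Nat.cast_natAbs, Int.cast_abs, sq_abs, ramp, ramp]
    push_cast
    ring
  rw [hsq, Qmat]
  split_ifs <;> simp_all <;> ring

theorem ramp_dotProduct_lap_qmat_mulVec {n : ℕ} (hn : 2 ≤ n) :
    ramp n ⬝ᵥ (Lap (Qmat n) *ᵥ ramp n) = 4 * (n - 2) * (n + 7) := by
  have h := two_mul_dotProduct_lap_mulVec (qmat_isSymm n) (ramp n)
  simp only [qmat_mul_sq_sub_ramp, sum_add_distrib, ← mul_sum] at h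
  rw [sum_sum_ite_natAbs_sub_eq n one_pos, sum_sum_ite_natAbs_sub_eq n two_pos,
    Nat.cast_sub (by omega), Nat.cast_sub hn] at h
  push_cast at h
  linarith

theorem linearIndependent_one_ramp {n : ℕ} (hn : 2 ≤ n) :
    LinearIndependent ℝ ![1, ramp n] := by
  refine LinearIndependent.pair_iff.mpr fun s t hst => ?_
  have h₀ := congrFun hst ⟨0, by omega⟩
  have h₁ := congrFun hst ⟨1, by omega⟩
  simp only [ramp, Pi.add_apply, Pi.smul_apply, Pi.one_apply, smul_eq_mul, Pi.zero_apply]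
    at h₀ h₁
  ring_nf at h₀ h₁
  obtain rfl : t = 0 := by linarith
  exact ⟨by linarith, rfl⟩

theorem stmt11 (n : ℕ) (hn : 5 ≤ n) :
    kthSmallest (Lap (Qmat n)) 2 ≤ 4 := by
  refine kthSmallest_two_le_of_mulVec_eq_zero (lap_isHermitian (qmat_isSymm n))
    (linearIndependent_one_ramp (by omega)) (lap_mulVec_one _) (one_dotProduct_ramp n)
    zero_le_four ?_
  rw [ramp_dotProduct_lap_qmat_mulVec (by omega), ramp_dotProduct_ramp]
  have hn' : (5 : ℝ) ≤ n := by exact_mod_cast hn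
  nlinarith [mul_nonneg (sub_nonneg.mpr hn') (by nlinarith : (0 : ℝ) ≤ n ^ 2 + 2 * n - 6)]
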